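/- arXiv:1703.04767 — 4 statements merged into one kernel-verified Lean document; each statement's English description precedes it below -/
import Mathlib

section
/- Let d and k be integers with 1 ≤ k ≤ d−1. There is a constant C = C(d,k) > 0 such that the following holds. Let Λ be a d-dimensional lattice in ℝ^d and let K ∈ K^d, and set λ_i := λ_i(Λ,K) for i = 1,…,d. If λ_d ≤ 1, then the set Λ ∩ K can be covered by at most C·(λ_{k+1}·λ_{k+2}·⋯·λ_d)^{−1} k-dimensional affine subspaces of ℝ^d. -/
open scoped BigOperators Pointwise
open Metric

noncomputable section

abbrev Euc (d : ℕ) := EuclideanSpace ℝ (Fin d)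

def IsLattice {d : ℕ} (Λ : Set (Euc d)) : Prop :=
  ∃ b : Fin d → Euc d, LinearIndependent ℝ b ∧
    Λ = {x : Euc d | ∃ c : Fin d → ℤ, x = ∑ i, (c i : ℝ) • b i}

def IsSymmConvexBody {d : ℕ} (K : Set (Euc d)) : Prop :=
  IsCompact K ∧ Convex ℝ K ∧ (interior K).Nonempty ∧ K = -K

def succMin {d : ℕ} (Λ K : Set (Euc d)) (i : ℕ) : ℝ :=
  sInf {r : ℝ | 0 < r ∧ ∃ v : Fin i → Euc d,
    LinearIndependent ℝ v ∧ ∀ j, v j ∈ Λ ∧ v j ∈ r • K}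

def unitBall (d : ℕ) : Set (Euc d) := Metric.closedBall 0 1

def intPoints (d : ℕ) : Set (Euc d) := {x | ∀ i, ∃ m : ℤ, x i = (m : ℝ)}

def dualLattice {d : ℕ} (Λ : Set (Euc d)) : Set (Euc d) :=
  {y | ∀ x ∈ Λ, ∃ m : ℤ, (inner ℝ x y : ℝ) = (m : ℝ)}

def IsPrimitive {d : ℕ} (L : Set (Euc d)) (z : Euc d) : Prop :=
  z ∈ L ∧ z ≠ 0 ∧ ∀ t : ℝ, t • z ∈ L → ∃ m : ℤ, t = (m : ℝ)

def IsHyperplane {d : ℕ} (A : AffineSubspace ℝ (Euc d)) : Prop :=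
  (A : Set (Euc d)).Nonempty ∧ Module.finrank ℝ A.direction = d - 1

def inc {d : ℕ} (P : Finset (Euc d)) (H : Finset (AffineSubspace ℝ (Euc d))) : ℕ :=
  Set.ncard {ph : Euc d × AffineSubspace ℝ (Euc d) | ph.1 ∈ P ∧ ph.2 ∈ H ∧ ph.1 ∈ ph.2}

def HasKrr {d : ℕ} (P : Finset (Euc d)) (H : Finset (AffineSubspace ℝ (Euc d))) (r₁ r₂ : ℕ) : Prop :=
  ∃ (P' : Finset (Euc d)) (H' : Finset (AffineSubspace ℝ (Euc d))),
    P' ⊆ P ∧ H' ⊆ H ∧ P'.card = r₁ ∧ H'.card = r₂ ∧ ∀ p ∈ P', ∀ h ∈ H', p ∈ h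

/-! Induction on the dimension, with lower bounds `ρ j ≤ λ_j` in place of the minima. Choose a
nonzero lattice vector `w ∈ a • K` with `a ≤ 3/2 · λ₁`; since `3/2 < 2`, `w` is primitive. Project
along `w`: a lattice point of `r • π K` lifts to one of `(r + a/2) • K`, and adding `w` to lifts of
`j` independent projected vectors gives `j + 1` independent ones, so the projected minima are at
least `λ_{j+1} / 7`. For `k ≥ 1` a cover of the projection by `(k-1)`-dimensional translates lifts
to one by `k`-dimensional translates containing `ℝ w`. For `k = 0` two points of `Λ ∩ K` in one
fibre differ by `n • w ∈ 2 • K`, so `|n| ≤ 2 / λ₁` and each fibre holds at most `4 / λ₁ + 1`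
points. Altogether at most `∏_{j > k} 6 · 7^d / λ_j` translates are needed. -/

section ConvexBalanced

variable {E : Type*} [AddCommGroup E] [Module ℝ E] {Q : Set E}

theorem Balanced.smul_mem_abs_smul (hQ : Balanced ℝ Q) (c : ℝ) {q : E} (hq : q ∈ Q) :
    c • q ∈ |c| • Q :=
  hQ.smul_mono (by simp) (Set.smul_mem_smul_set hq)

theorem Balanced.smul_subset_smul_of_le (hQ : Balanced ℝ Q) {a b : ℝ} (ha : 0 ≤ a) (hab : a ≤ b) :
    a • Q ⊆ b • Q :=
  hQ.smul_mono (by rwa [Real.norm_of_nonneg ha, Real.norm_of_nonneg (ha.trans hab)])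

theorem Balanced.mem_smul_of_smul_mem (hQ : Balanced ℝ Q) {b c : ℝ} (hc : c ≠ 0) {v : E}
    (hv : c • v ∈ b • Q) : v ∈ |b / c| • Q := by
  obtain ⟨q, hq, hqv⟩ := hv
  have hv : v = (b / c) • q := by
    rw [div_eq_inv_mul, mul_smul, show b • q = c • v from hqv, smul_smul, inv_mul_cancel₀ hc,
      one_smul]
  exact hv ▸ hQ.smul_mem_abs_smul _ hq

theorem Balanced.image_linearMap {F : Type*} [AddCommGroup F] [Module ℝ F] (hQ : Balanced ℝ Q)
    (f : E →ₗ[ℝ] F) : Balanced ℝ (f '' Q) := fun c hc => by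
  rw [← image_smul_set]
  exact Set.image_mono (hQ c hc)

theorem Convex.add_mem_smul_add (hQ : Convex ℝ Q) {a b : ℝ} (ha : 0 ≤ a) (hb : 0 ≤ b) {u v : E}
    (hu : u ∈ a • Q) (hv : v ∈ b • Q) : u + v ∈ (a + b) • Q := by
  rw [hQ.add_smul ha hb]
  exact Set.add_mem_add hu hv

theorem Convex.sub_mem_two_smul (hQc : Convex ℝ Q) (hQb : Balanced ℝ Q) {x y : E} (hx : x ∈ Q)
    (hy : y ∈ Q) : x - y ∈ (2 : ℝ) • Q := by
  have hy' : -y ∈ Q := hQb.neg_mem_iff.mpr hy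
  rw [sub_eq_add_neg, show (2 : ℝ) = 1 + 1 by norm_num]
  exact hQc.add_mem_smul_add zero_le_one zero_le_one (by rwa [one_smul]) (by rwa [one_smul])

end ConvexBalanced

theorem linearIndependent_finCons_of_comp {K V W : Type*} [Field K] [AddCommGroup V] [Module K V]
    [AddCommGroup W] [Module K W] (f : V →ₗ[K] W) {n : ℕ} {x : Fin n → V} {w : V} (hw : w ≠ 0)
    (hfw : f w = 0) (hx : LinearIndependent K (f ∘ x)) :
    LinearIndependent K (Fin.cons w x : Fin (n + 1) → V) := by
  refine linearIndependent_finCons.mpr ⟨hx.of_comp f, fun hmem => hw ?_⟩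
  obtain ⟨c, rfl⟩ := (Submodule.mem_span_range_iff_exists_fun K).mp hmem
  have hc : ∑ i, c i • (f ∘ x) i = 0 := by simpa [map_sum] using hfw
  simp [Fintype.linearIndependent_iff.mp hx c hc]

theorem Submodule.exists_le_finrank_eq {K V : Type*} [Field K] [AddCommGroup V] [Module K V]
    [FiniteDimensional K V] (T : Submodule K V) {k : ℕ} (hTk : Module.finrank K T ≤ k)
    (hk : k ≤ Module.finrank K V) : ∃ T' : Submodule K V, T ≤ T' ∧ Module.finrank K T' = k := by
  induction k with
  | zero => exact ⟨T, le_rfl, by omega⟩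
  | succ k ih =>
    rcases hTk.eq_or_lt with hTk | hTk
    · exact ⟨T, le_rfl, hTk⟩
    obtain ⟨T', hTT', hT'⟩ := ih (by omega) (by omega)
    have hlt : T' < ⊤ := by
      refine lt_top_iff_ne_top.mpr fun htop => ?_
      rw [htop, finrank_top] at hT'
      omega
    obtain ⟨v, -, hv⟩ := SetLike.exists_of_lt hlt
    exact ⟨T' ⊔ K ∙ v, hTT'.trans le_sup_left, by rw [finrank_sup_span_singleton hv, hT']⟩

theorem Int.card_Icc_neg_floor_le {c : ℝ} (hc : 0 ≤ c) :
    ((Finset.Icc (-⌊c⌋) ⌊c⌋).card : ℝ) ≤ 2 * c + 1 := by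
  have hN := Int.floor_nonneg.mpr hc
  have hcard : ((⌊c⌋ + 1 - -⌊c⌋).toNat : ℤ) = 2 * ⌊c⌋ + 1 := by omega
  have hcard' : ((⌊c⌋ + 1 - -⌊c⌋).toNat : ℝ) = 2 * ⌊c⌋ + 1 := by exact_mod_cast hcard
  rw [Int.card_Icc, hcard']
  linarith [Int.floor_le c]

theorem Finset.prod_div_le_pow_mul_inv {ι : Type*} {s : Finset ι} {f : ι → ℝ} {c : ℝ} {n : ℕ}
    (hc : 1 ≤ c) (hs : s.card ≤ n) (hf : ∀ i ∈ s, 0 < f i) :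
    ∏ i ∈ s, c / f i ≤ c ^ n * (∏ i ∈ s, f i)⁻¹ := by
  rw [Finset.prod_div_distrib, Finset.prod_const, div_eq_mul_inv]
  exact mul_le_mul_of_nonneg_right (pow_le_pow_right₀ hc hs)
    (inv_nonneg.mpr (Finset.prod_nonneg fun i hi => (hf i hi).le))

theorem prod_Icc_shift_div_seven (ρ : ℕ → ℝ) (k m : ℕ) :
    ∏ j ∈ Finset.Icc (k + 1) m, 6 * 7 ^ m / (ρ (j + 1) / 7) =
      ∏ j ∈ Finset.Icc (k + 2) (m + 1), 6 * 7 ^ (m + 1) / ρ j := by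
  rw [show k + 2 = k + 1 + 1 from rfl, ← Finset.map_add_right_Icc _ _ 1, Finset.prod_map]
  refine Finset.prod_congr rfl fun j _ => ?_
  simp only [addRightEmbedding_apply]
  rw [div_div_eq_mul_div, pow_succ]
  ring

theorem one_le_prod_Icc_div {ρ : ℕ → ℝ} {k m : ℕ}
    (hρ : ∀ j, 1 ≤ j → j ≤ m → 0 < ρ j ∧ ρ j ≤ 2) :
    1 ≤ ∏ j ∈ Finset.Icc (k + 1) m, 6 * 7 ^ m / ρ j := by
  refine Finset.one_le_prod fun j hj => ?_
  obtain ⟨hj1, hjm⟩ := Finset.mem_Icc.mp hj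
  obtain ⟨hρpos, hρ2⟩ := hρ j (by omega) hjm
  rw [one_le_div hρpos]
  nlinarith [one_le_pow₀ (by norm_num : (1 : ℝ) ≤ 7) (n := m)]

theorem prod_Icc_shift_div_seven_mul_le {ρ : ℕ → ℝ} {m : ℕ}
    (hρ : ∀ j, 1 ≤ j → j ≤ m + 1 → 0 < ρ j ∧ ρ j ≤ 2) :
    (∏ j ∈ Finset.Icc 1 m, 6 * 7 ^ m / (ρ (j + 1) / 7)) * (4 / ρ 1 + 1) ≤
      ∏ j ∈ Finset.Icc 1 (m + 1), 6 * 7 ^ (m + 1) / ρ j := by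
  have hρ₁ := hρ 1 le_rfl (by omega)
  rw [prod_Icc_shift_div_seven ρ 0 m, Finset.Icc_eq_cons_Ioc (by omega : 1 ≤ m + 1),
    Finset.prod_cons, ← Finset.Icc_add_one_left_eq_Ioc, mul_comm]
  refine mul_le_mul_of_nonneg_right ?_ (Finset.prod_nonneg fun j hj => ?_)
  · have h7 : (1 : ℝ) ≤ 7 ^ (m + 1) := one_le_pow₀ (by norm_num)
    rw [div_add_one hρ₁.1.ne', div_le_div_iff_of_pos_right hρ₁.1]
    nlinarith
  · obtain ⟨hj2, hjm⟩ := Finset.mem_Icc.mp hj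
    have := (hρ j (by omega) hjm).1
    positivity

section Projection

variable {E : Type*} [AddCommGroup E] [Module ℝ E]

def projAlong (φ : Module.Dual ℝ E) (w : E) : E →ₗ[ℝ] E := LinearMap.id - φ.smulRight w

variable {φ : Module.Dual ℝ E} {w : E}

theorem projAlong_apply (x : E) : projAlong φ w x = x - φ x • w := rfl

theorem projAlong_self (hφ : φ w = 1) : projAlong φ w w = 0 := by
  rw [projAlong_apply, hφ, one_smul, sub_self]

theorem sub_projAlong_mem_span (x : E) : x - projAlong φ w x ∈ ℝ ∙ w := by
  rw [projAlong_apply, sub_sub_cancel]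
  exact Submodule.smul_mem _ _ (Submodule.mem_span_singleton_self w)

theorem sub_eq_smul_of_projAlong_eq {x y : E} (h : projAlong φ w x = projAlong φ w y) :
    x - y = φ (x - y) • w := by
  rw [← sub_eq_zero, ← projAlong_apply, map_sub, h, sub_self]

end Projection

section Lattice

variable {E : Type*} [AddCommGroup E] [Module ℝ E] {L : AddSubgroup E} {Q : Set E} {w : E} {a : ℝ}
  {φ : Module.Dual ℝ E}

/-- The field `le` says `a ≤ 3/2 · λ₁(L, Q)`; any factor below `2` would make `w` primitive
in `L`. -/
structure IsNearlyShortest (L : AddSubgroup E) (Q : Set E) (w : E) (a : ℝ) : Prop where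
  mem : w ∈ L
  ne_zero : w ≠ 0
  pos : 0 < a
  mem_smul : w ∈ a • Q
  le : ∀ r, 0 < r → ∀ x ∈ L, x ≠ 0 → x ∈ r • Q → 2 * a ≤ 3 * r

theorem exists_isNearlyShortest {x : E} (hx : x ∈ L) (hx0 : x ≠ 0) (hxQ : x ∈ Q) {c : ℝ}
    (hc : 0 < c) (hmin : ∀ r, 0 < r → ∀ y ∈ L, y ≠ 0 → y ∈ r • Q → c ≤ r) :
    ∃ w a, IsNearlyShortest L Q w a := by
  set S := {r : ℝ | 0 < r ∧ ∃ y ∈ L, y ≠ 0 ∧ y ∈ r • Q}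
  have hS : S.Nonempty := ⟨1, one_pos, x, hx, hx0, by rwa [one_smul]⟩
  have hbdd : BddBelow S := ⟨0, fun r hr => hr.1.le⟩
  have hcS : c ≤ sInf S := le_csInf hS fun r ⟨hr, y, hy, hy0, hyQ⟩ => hmin r hr y hy hy0 hyQ
  obtain ⟨a, ⟨ha, w, hw, hw0, hwQ⟩, haS⟩ :=
    exists_lt_of_csInf_lt hS (by linarith : sInf S < 3 / 2 * sInf S)
  refine ⟨w, a, hw, hw0, ha, hwQ, fun r hr y hy hy0 hyQ => ?_⟩
  have := csInf_le hbdd ⟨hr, y, hy, hy0, hyQ⟩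
  linarith

/-- `ρ j ≤ λ_j(L, Q)` for `1 ≤ j ≤ m`, stated without infima. -/
def IsSuccMinLowerBound (L : AddSubgroup E) (Q : Set E) (m : ℕ) (ρ : ℕ → ℝ) : Prop :=
  ∀ j, 1 ≤ j → j ≤ m → ∀ r, 0 < r → ∀ x : Fin j → E, LinearIndependent ℝ x →
    (∀ i, x i ∈ L ∧ x i ∈ r • Q) → ρ j ≤ r

theorem IsSuccMinLowerBound.first {m : ℕ} {ρ : ℕ → ℝ} (hρ : IsSuccMinLowerBound L Q m ρ)
    (hm : 1 ≤ m) : ∀ r, 0 < r → ∀ x ∈ L, x ≠ 0 → x ∈ r • Q → ρ 1 ≤ r :=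
  fun r hr x hx hx0 hxQ => hρ 1 le_rfl hm r hr (fun _ => x)
    (linearIndependent_unique_iff.mpr hx0) fun _ => ⟨hx, hxQ⟩

namespace IsNearlyShortest

theorem smul_mem (h : IsNearlyShortest L Q w a) (hQ : Balanced ℝ Q) (c : ℝ) :
    c • w ∈ (|c| * a) • Q := by
  obtain ⟨q, hq, hqw⟩ := h.mem_smul
  have := hQ.smul_mem_abs_smul (c * a) hq
  rw [abs_mul, abs_of_pos h.pos] at this
  rwa [← show a • q = w from hqw, smul_smul]

theorem exists_int_eq (h : IsNearlyShortest L Q w a) (hQ : Balanced ℝ Q) {t : ℝ}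
    (ht : t • w ∈ L) : ∃ n : ℤ, t = n := by
  refine ⟨round t, by_contra fun hne => ?_⟩
  have hτ : t - round t ≠ 0 := sub_ne_zero.mpr hne
  have hmem : (t - round t) • w ∈ L := by
    rw [sub_smul, Int.cast_smul_eq_zsmul]
    exact sub_mem ht (L.zsmul_mem h.mem _)
  have hle := h.le _ (mul_pos (abs_pos.mpr hτ) h.pos) _ hmem (smul_ne_zero hτ h.ne_zero)
    (h.smul_mem hQ _)
  nlinarith [abs_sub_round t, h.pos]

theorem exists_lift (h : IsNearlyShortest L Q w a) (hQc : Convex ℝ Q) (hQb : Balanced ℝ Q)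
    (hφ : φ w = 1) {x q : E} (hx : x ∈ L) (hq : q ∈ Q) {r : ℝ} (hr : 0 ≤ r)
    (hxq : projAlong φ w x = r • projAlong φ w q) :
    ∃ x' ∈ L, projAlong φ w x' = projAlong φ w x ∧ x' ∈ (r + a / 2) • Q := by
  set t := φ (x - r • q)
  have hxt : x = r • q + t • w :=
    (sub_eq_iff_eq_add').mp (sub_eq_smul_of_projAlong_eq (by rw [map_smul, hxq]))
  refine ⟨x - round t • w, sub_mem hx (L.zsmul_mem h.mem _), ?_, ?_⟩
  · rw [map_sub, map_zsmul, projAlong_self hφ, smul_zero, sub_zero]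
  · have hx' : x - round t • w = r • q + (t - round t) • w := by
      rw [hxt, sub_smul, ← Int.cast_smul_eq_zsmul ℝ]
      abel
    rw [hx']
    refine hQc.add_mem_smul_add hr (by linarith [h.pos]) (Set.smul_mem_smul_set hq)
      (hQb.smul_subset_smul_of_le (mul_nonneg (abs_nonneg _) h.pos.le) ?_ (h.smul_mem hQb _))
    nlinarith [abs_sub_round t, h.pos]

theorem isSuccMinLowerBound_map (h : IsNearlyShortest L Q w a) (hQc : Convex ℝ Q)
    (hQb : Balanced ℝ Q) (hφ : φ w = 1) {m : ℕ} {ρ : ℕ → ℝ}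
    (hρ : IsSuccMinLowerBound L Q (m + 1) ρ) :
    IsSuccMinLowerBound (L.map (projAlong φ w).toAddMonoidHom) (projAlong φ w '' Q) m
      (fun j => ρ (j + 1) / 7) := by
  intro j hj1 hjm r hr y hy hyL
  have hlift : ∀ i, ∃ x ∈ L, projAlong φ w x = y i ∧ x ∈ (r + a / 2) • Q := by
    intro i
    obtain ⟨⟨x, hx, hxy⟩, ⟨_, ⟨q, hq, rfl⟩, hqy⟩⟩ := hyL i
    obtain ⟨x', hx', hx'x, hx'Q⟩ :=
      h.exists_lift hQc hQb hφ hx hq hr.le (by rw [← hqy] at hxy; exact hxy)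
    exact ⟨x', hx', hx'x.trans hxy, hx'Q⟩
  choose x hxL hxy hxQ using hlift
  have hind : LinearIndependent ℝ (Fin.cons w x : Fin (j + 1) → E) :=
    linearIndependent_finCons_of_comp _ h.ne_zero (projAlong_self hφ)
      (by rwa [show ⇑(projAlong φ w) ∘ x = y from funext hxy])
  -- the lifts together with `w` give `j + 1` independent vectors in `(r + a) • Q`
  have hρr : ρ (j + 1) ≤ r + a := by
    refine hρ (j + 1) (by omega) (by omega) _ (by linarith [h.pos]) _ hind
      (Fin.forall_fin_succ.mpr ⟨?_, fun i => ?_⟩)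
    · simpa using ⟨h.mem, hQb.smul_subset_smul_of_le h.pos.le (by linarith) h.mem_smul⟩
    · simpa using ⟨hxL i,
        hQb.smul_subset_smul_of_le (by linarith [h.pos]) (by linarith [h.pos]) (hxQ i)⟩
  have har : 2 * a ≤ 3 * (r + a / 2) :=
    h.le _ (by linarith [h.pos]) _ (hxL ⟨0, hj1⟩)
      ((linearIndependent_finCons.mp hind).1.ne_zero _) (hxQ _)
  rw [div_le_iff₀ (by norm_num)]
  linarith

theorem exists_int_of_projAlong_eq (h : IsNearlyShortest L Q w a) (hQc : Convex ℝ Q)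
    (hQb : Balanced ℝ Q) {ρ₁ : ℝ} (hρ₁ : 0 < ρ₁)
    (hmin : ∀ r, 0 < r → ∀ x ∈ L, x ≠ 0 → x ∈ r • Q → ρ₁ ≤ r) {x y : E}
    (hx : x ∈ (L : Set E) ∩ Q) (hy : y ∈ (L : Set E) ∩ Q)
    (hxy : projAlong φ w x = projAlong φ w y) :
    ∃ n : ℤ, |n| ≤ ⌊2 / ρ₁⌋ ∧ x = y + n • w := by
  have hsub := sub_eq_smul_of_projAlong_eq hxy
  obtain ⟨n, hn⟩ := h.exists_int_eq hQb (hsub ▸ sub_mem hx.1 hy.1)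
  rw [hn, Int.cast_smul_eq_zsmul] at hsub
  refine ⟨n, ?_, (sub_eq_iff_eq_add').mp hsub⟩
  rcases eq_or_ne n 0 with rfl | hn0
  · simpa using Int.floor_nonneg.mpr (by positivity : 0 ≤ 2 / ρ₁)
  have hn0' : (n : ℝ) ≠ 0 := Int.cast_ne_zero.mpr hn0
  have hwQ : w ∈ |2 / (n : ℝ)| • Q := by
    refine hQb.mem_smul_of_smul_mem hn0' ?_
    rw [Int.cast_smul_eq_zsmul, ← hsub]
    exact hQc.sub_mem_two_smul hQb hx.2 hy.2
  have hle := hmin _ (abs_pos.mpr (div_ne_zero two_ne_zero hn0')) w h.mem h.ne_zero hwQ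
  rw [abs_div, abs_two, le_div_iff₀ (abs_pos.mpr hn0')] at hle
  rw [Int.le_floor, Int.cast_abs, le_div_iff₀ hρ₁]
  linarith

theorem not_linearIndependent_map (h : IsNearlyShortest L Q w a) (hφ : φ w = 1) {m : ℕ}
    (hrank : ∀ x : Fin (m + 2) → E, (∀ i, x i ∈ L) → ¬LinearIndependent ℝ x)
    (y : Fin (m + 1) → E) (hy : ∀ i, y i ∈ L.map (projAlong φ w).toAddMonoidHom) :
    ¬LinearIndependent ℝ y := by
  intro hind
  choose x hxL hxy using fun i => AddSubgroup.mem_map.mp (hy i)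
  refine hrank (Fin.cons w x)
    (Fin.forall_fin_succ.mpr ⟨by simpa using h.mem, by simpa using hxL⟩)
    (linearIndependent_finCons_of_comp _ h.ne_zero (projAlong_self hφ) ?_)
  rwa [show ⇑(projAlong φ w) ∘ x = y from funext hxy]

end IsNearlyShortest

end Lattice

section Covering

variable {E : Type*} [AddCommGroup E] [Module ℝ E]

/-- Meant for finite-dimensional `E`: an infinite-dimensional `T` has the junk `finrank` `0`. -/
def CoveredByTranslates (S : Set E) (k : ℕ) (B : ℝ) : Prop :=
  ∃ (T : Submodule ℝ E) (F : Finset E), Module.finrank ℝ T ≤ k ∧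
    (∀ x ∈ S, ∃ f ∈ F, x - f ∈ T) ∧ (F.card : ℝ) ≤ B

namespace CoveredByTranslates

variable {S S' : Set E} {k : ℕ} {B B' : ℝ}

theorem mono (h : CoveredByTranslates S k B) (hS : S' ⊆ S) (hB : B ≤ B') :
    CoveredByTranslates S' k B' := by
  obtain ⟨T, F, hT, hF, hFB⟩ := h
  exact ⟨T, F, hT, fun x hx => hF x (hS hx), hFB.trans hB⟩

theorem of_subset_zero (hS : S ⊆ {0}) (hB : 1 ≤ B) : CoveredByTranslates S k B :=
  ⟨⊥, {0}, by simp, fun x hx => ⟨0, Finset.mem_singleton_self _, by simpa using hS hx⟩,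
    by simpa using hB⟩

theorem of_image_projAlong [FiniteDimensional ℝ E] {φ : Module.Dual ℝ E} {w : E}
    (h : CoveredByTranslates (projAlong φ w '' S) k B) : CoveredByTranslates S (k + 1) B := by
  obtain ⟨T, F, hT, hF, hFB⟩ := h
  refine ⟨(ℝ ∙ w) ⊔ T, F, ?_, fun x hx => ?_, hFB⟩
  · calc Module.finrank ℝ ↥((ℝ ∙ w) ⊔ T)
        ≤ Module.finrank ℝ (ℝ ∙ w) + Module.finrank ℝ T :=
          Submodule.finrank_add_le_finrank_add_finrank _ _
      _ ≤ 1 + k := add_le_add ((finrank_span_le_card {w}).trans (by simp)) hT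
      _ = k + 1 := add_comm _ _
  · obtain ⟨f, hf, hxf⟩ := hF _ (Set.mem_image_of_mem _ hx)
    refine ⟨f, hf, ?_⟩
    rw [← sub_add_sub_cancel x (projAlong φ w x) f]
    exact Submodule.add_mem_sup (sub_projAlong_mem_span x) hxf

end CoveredByTranslates

theorem IsNearlyShortest.coveredByTranslates_zero [FiniteDimensional ℝ E] {L : AddSubgroup E}
    {Q : Set E} {w : E} {a : ℝ} {φ : Module.Dual ℝ E} (h : IsNearlyShortest L Q w a)
    (hQc : Convex ℝ Q) (hQb : Balanced ℝ Q)
    {ρ₁ : ℝ} (hρ₁ : 0 < ρ₁) (hmin : ∀ r, 0 < r → ∀ x ∈ L, x ≠ 0 → x ∈ r • Q → ρ₁ ≤ r) {B : ℝ}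
    (hcov : CoveredByTranslates (projAlong φ w '' ((L : Set E) ∩ Q)) 0 B) :
    CoveredByTranslates ((L : Set E) ∩ Q) 0 (B * (4 / ρ₁ + 1)) := by
  classical
  obtain ⟨T, F, hT, hF, hFB⟩ := hcov
  have hTbot : T = ⊥ := Submodule.finrank_eq_zero.mp (by omega)
  set S := (L : Set E) ∩ Q
  have hrep : ∀ f, ∃ y, ∀ x ∈ S, projAlong φ w x = f → y ∈ S ∧ projAlong φ w y = f := by
    intro f
    by_cases hf : ∃ x ∈ S, projAlong φ w x = f
    · obtain ⟨x, hx, hxf⟩ := hf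
      exact ⟨x, fun _ _ _ => ⟨hx, hxf⟩⟩
    · exact ⟨0, fun x hx hxf => (hf ⟨x, hx, hxf⟩).elim⟩
  choose g hg using hrep
  set N := ⌊2 / ρ₁⌋
  -- each fibre of the projection meets `S` in points `g f + n • w` with `|n| ≤ N`
  refine ⟨⊥, F.biUnion fun f => (Finset.Icc (-N) N).image fun n => g f + n • w, by simp,
    fun x hx => ?_, ?_⟩
  · obtain ⟨f, hf, hxf⟩ := hF _ (Set.mem_image_of_mem _ hx)
    rw [hTbot, Submodule.mem_bot, sub_eq_zero] at hxf
    obtain ⟨hgS, hgf⟩ := hg f x hx hxf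
    obtain ⟨n, hnN, hxn⟩ :=
      h.exists_int_of_projAlong_eq hQc hQb hρ₁ hmin hx hgS (hxf.trans hgf.symm)
    exact ⟨x, Finset.mem_biUnion.mpr ⟨f, hf, Finset.mem_image.mpr
      ⟨n, Finset.mem_Icc.mpr (abs_le.mp hnN), hxn.symm⟩⟩, by simp⟩
  · have hN : ((Finset.Icc (-N) N).card : ℝ) ≤ 4 / ρ₁ + 1 := by
      have := Int.card_Icc_neg_floor_le (c := 2 / ρ₁) (by positivity)
      linarith [show 2 * (2 / ρ₁) = 4 / ρ₁ by ring]
    calc ((F.biUnion fun f => (Finset.Icc (-N) N).image fun n => g f + n • w).card : ℝ)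
        ≤ F.card * (Finset.Icc (-N) N).card := by
          exact_mod_cast Finset.card_biUnion_le_card_mul _ _ _ fun f _ => Finset.card_image_le
      _ ≤ B * (4 / ρ₁ + 1) :=
          mul_le_mul hFB hN (Nat.cast_nonneg _) ((Nat.cast_nonneg _).trans hFB)

theorem coveredByTranslates_of_isSuccMinLowerBound [FiniteDimensional ℝ E] (m : ℕ) {k : ℕ}
    {L : AddSubgroup E} {Q : Set E} {ρ : ℕ → ℝ} (hQc : Convex ℝ Q) (hQb : Balanced ℝ Q)
    (hrank : ∀ x : Fin (m + 1) → E, (∀ i, x i ∈ L) → ¬LinearIndependent ℝ x)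
    (hρ : ∀ j, 1 ≤ j → j ≤ m → 0 < ρ j ∧ ρ j ≤ 2) (hmin : IsSuccMinLowerBound L Q m ρ) :
    CoveredByTranslates ((L : Set E) ∩ Q) k (∏ j ∈ Finset.Icc (k + 1) m, 6 * 7 ^ m / ρ j) := by
  induction m generalizing k L Q ρ with
  | zero =>
    refine CoveredByTranslates.of_subset_zero (fun x hx => ?_) (by simp)
    by_contra hx0
    exact hrank (fun _ => x) (fun _ => hx.1) ((linearIndependent_unique_iff (ι := Fin 1)).mpr hx0)
  | succ m ih =>
    by_cases hS : (L : Set E) ∩ Q ⊆ {0}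
    · exact CoveredByTranslates.of_subset_zero hS (one_le_prod_Icc_div hρ)
    obtain ⟨x, ⟨hxL, hxQ⟩, hx0⟩ := Set.not_subset.mp hS
    have hρ₁ := hρ 1 le_rfl (by omega)
    obtain ⟨w, a, h⟩ := exists_isNearlyShortest hxL hx0 hxQ hρ₁.1 (hmin.first (by omega))
    obtain ⟨φ, hφ⟩ := Module.Projective.exists_dual_eq_one ℝ h.ne_zero
    have himage : projAlong φ w '' ((L : Set E) ∩ Q) ⊆
        (L.map (projAlong φ w).toAddMonoidHom : Set E) ∩ projAlong φ w '' Q :=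
      fun _ ⟨y, hy, hyx⟩ => ⟨⟨y, hy.1, hyx⟩, y, hy.2, hyx⟩
    have hcov := fun k => (ih (k := k) (hQc.linear_image _) (hQb.image_linearMap _)
      (h.not_linearIndependent_map hφ hrank)
      (fun j hj1 hjm => ⟨by linarith [(hρ (j + 1) (by omega) (by omega)).1],
        by linarith [(hρ (j + 1) (by omega) (by omega)).2]⟩)
      (h.isSuccMinLowerBound_map hQc hQb hφ hmin)).mono himage le_rfl
    cases k with
    | zero =>
      exact (h.coveredByTranslates_zero hQc hQb hρ₁.1 (hmin.first (by omega)) (hcov 0)).mono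
        subset_rfl (prod_Icc_shift_div_seven_mul_le hρ)
    | succ k =>
      exact (hcov k).of_image_projAlong.mono subset_rfl (prod_Icc_shift_div_seven ρ k m).le

theorem CoveredByTranslates.exists_affineSubspace_cover [FiniteDimensional ℝ E] {S : Set E}
    {k : ℕ} {B : ℝ} (h : CoveredByTranslates S k B) (hk : k ≤ Module.finrank ℝ E) :
    ∃ 𝒜 : Finset (AffineSubspace ℝ E),
      (∀ A ∈ 𝒜, (A : Set E).Nonempty ∧ Module.finrank ℝ A.direction = k) ∧
      (∀ x ∈ S, ∃ A ∈ 𝒜, x ∈ A) ∧ (𝒜.card : ℝ) ≤ B := by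
  classical
  obtain ⟨T, F, hT, hF, hFB⟩ := h
  obtain ⟨T', hTT', hT'⟩ := T.exists_le_finrank_eq hT hk
  refine ⟨F.image (AffineSubspace.mk' · T'), ?_, fun x hx => ?_, ?_⟩
  · simp only [Finset.mem_image]
    rintro _ ⟨f, -, rfl⟩
    exact ⟨⟨f, AffineSubspace.self_mem_mk' f T'⟩, by rwa [AffineSubspace.direction_mk']⟩
  · obtain ⟨f, hf, hxf⟩ := hF x hx
    exact ⟨_, Finset.mem_image_of_mem _ hf, AffineSubspace.mem_mk'.mpr (hTT' hxf)⟩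
  · exact (Nat.cast_le.mpr Finset.card_image_le).trans hFB

end Covering

theorem Module.Basis.exists_le_norm_of_mem_span_int {E ι : Type*} [NormedAddCommGroup E]
    [NormedSpace ℝ E] [Finite ι] (B : Module.Basis ι ℝ E) :
    ∃ δ > 0, ∀ x ∈ Submodule.span ℤ (Set.range B), x ≠ 0 → δ ≤ ‖x‖ := by
  obtain ⟨δ, hδ, hball⟩ := exists_ball_inter_eq_singleton_of_mem_discrete
    ⟨inferInstanceAs (DiscreteTopology (Submodule.span ℤ (Set.range B)))⟩
    (zero_mem (Submodule.span ℤ (Set.range B)))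
  refine ⟨δ, hδ, fun x hx hx0 => not_lt.mp fun hlt => hx0 ?_⟩
  have hx' : x ∈ ball 0 δ ∩ Submodule.span ℤ (Set.range B) := ⟨mem_ball_zero_iff.mpr hlt, hx⟩
  rwa [hball] at hx'

section Euclidean

variable {d : ℕ} {Λ K : Set (Euc d)}

theorem IsLattice.exists_basis (hΛ : IsLattice Λ) :
    ∃ B : Module.Basis (Fin d) ℝ (Euc d), Λ = Submodule.span ℤ (Set.range B) := by
  obtain ⟨b, hb, rfl⟩ := hΛ
  refine ⟨basisOfLinearIndependentOfCardEqFinrank' b hb (by simp), Set.ext fun x => ?_⟩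
  rw [coe_basisOfLinearIndependentOfCardEqFinrank', SetLike.mem_coe,
    Submodule.mem_span_range_iff_exists_fun]
  simp only [Set.mem_ofPred_eq, Int.cast_smul_eq_zsmul, eq_comm]

namespace IsSymmConvexBody

theorem balanced (hK : IsSymmConvexBody K) : Balanced ℝ K :=
  (balanced_iff_neg_mem hK.2.1).mpr fun x hx => by
    have hx' : -x ∈ -K := Set.neg_mem_neg.mpr hx
    rwa [← hK.2.2.2] at hx'

theorem zero_mem_interior (hK : IsSymmConvexBody K) : (0 : Euc d) ∈ interior K := by
  obtain ⟨x, hx⟩ := hK.2.2.1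
  have hneg : -x ∈ interior K := by
    have himage := (Homeomorph.neg (Euc d)).image_interior K
    simp only [Homeomorph.coe_neg, Set.image_neg_eq_neg, ← hK.2.2.2] at himage
    rw [← himage]
    exact Set.neg_mem_neg.mpr hx
  simpa using hK.2.1.interior hx hneg one_half_pos.le one_half_pos.le (add_halves 1)

theorem exists_pos_forall_mem_smul (hK : IsSymmConvexBody K) {ι : Type*} [Finite ι]
    (b : ι → Euc d) : ∃ r : ℝ, 0 < r ∧ ∀ i, b i ∈ r • K := by
  obtain ⟨r, hr, hsub⟩ := ((absorbent_nhds_zero (𝕜 := ℝ) (mem_interior_iff_mem_nhds.mp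
    hK.zero_mem_interior)).absorbs_finite (Set.finite_range b)).exists_pos
  exact ⟨r, hr, fun i => hsub r (Real.norm_of_nonneg hr.le).ge (Set.mem_range_self i)⟩

theorem exists_norm_le (hK : IsSymmConvexBody K) : ∃ R > 0, ∀ x ∈ K, ‖x‖ ≤ R := by
  obtain ⟨R, hR⟩ := isBounded_iff_forall_norm_le.mp hK.1.isBounded
  exact ⟨max R 1, by positivity, fun x hx => (hR x hx).trans (le_max_left _ _)⟩

end IsSymmConvexBody

theorem succMin_le {i : ℕ} {r : ℝ} (hr : 0 < r) {v : Fin i → Euc d} (hv : LinearIndependent ℝ v)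
    (hvΛK : ∀ j, v j ∈ Λ ∧ v j ∈ r • K) : succMin Λ K i ≤ r :=
  csInf_le ⟨0, fun _ hs => hs.1.le⟩ ⟨hr, v, hv, hvΛK⟩

theorem IsLattice.succMin_mem_Ioc (hΛ : IsLattice Λ) (hK : IsSymmConvexBody K)
    (hd : succMin Λ K d ≤ 1) {j : ℕ} (hj1 : 1 ≤ j) (hjd : j ≤ d) :
    succMin Λ K j ∈ Set.Ioc (0 : ℝ) 1 := by
  obtain ⟨B, rfl⟩ := hΛ.exists_basis
  obtain ⟨δ, hδ, hδB⟩ := B.exists_le_norm_of_mem_span_int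
  obtain ⟨R, hR, hRK⟩ := hK.exists_norm_le
  obtain ⟨r₀, hr₀, hBK⟩ := hK.exists_pos_forall_mem_smul B
  set S := fun i => {r : ℝ | 0 < r ∧ ∃ v : Fin i → Euc d, LinearIndependent ℝ v ∧
    ∀ l, v l ∈ (Submodule.span ℤ (Set.range B) : Set (Euc d)) ∧ v l ∈ r • K}
  have hSd : r₀ ∈ S d :=
    ⟨hr₀, B, B.linearIndependent, fun l => ⟨Submodule.subset_span (Set.mem_range_self l), hBK l⟩⟩
  have hSjd : S d ⊆ S j := fun r ⟨hr, v, hv, hvΛK⟩ =>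
    ⟨hr, v ∘ Fin.castLE hjd, hv.comp _ (Fin.castLE_injective hjd), fun l => hvΛK _⟩
  -- a nonzero lattice vector in `r • K` has norm at least `δ` and at most `r * R`
  have hlow : ∀ r ∈ S j, δ / R ≤ r := by
    rintro r ⟨hr, v, hv, hvΛK⟩
    obtain ⟨hvΛ, q, hq, hqv⟩ := hvΛK ⟨0, hj1⟩
    have hδv := hδB _ hvΛ (hv.ne_zero _)
    rw [← hqv, norm_smul, Real.norm_of_nonneg hr.le] at hδv
    rw [div_le_iff₀ hR]
    nlinarith [hRK q hq]
  exact ⟨(div_pos hδ hR).trans_le (le_csInf ⟨r₀, hSjd hSd⟩ hlow),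
    (csInf_le_csInf ⟨0, fun _ hs => hs.1.le⟩ ⟨r₀, hSd⟩ hSjd).trans hd⟩

end Euclidean

theorem statement5_general (d k : ℕ) (hkd : k + 1 ≤ d) :
    ∃ C : ℝ, 0 < C ∧
      ∀ (Λ K : Set (Euc d)), IsLattice Λ → IsSymmConvexBody K →
        succMin Λ K d ≤ 1 →
        ∃ S : Finset (AffineSubspace ℝ (Euc d)),
          (∀ A ∈ S, (A : Set (Euc d)).Nonempty ∧ Module.finrank ℝ A.direction = k) ∧
          (∀ x ∈ Λ ∩ K, ∃ A ∈ S, x ∈ A) ∧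
          (S.card : ℝ) ≤ C * (∏ i ∈ Finset.Icc (k+1) d, succMin Λ K i)⁻¹ := by
  refine ⟨(6 * 7 ^ d) ^ d, by positivity, fun Λ K hΛ hK hd => ?_⟩
  have hsucc := fun j (hj1 : 1 ≤ j) (hjd : j ≤ d) => hΛ.succMin_mem_Ioc hK hd hj1 hjd
  obtain ⟨B, rfl⟩ := hΛ.exists_basis
  have hcov := coveredByTranslates_of_isSuccMinLowerBound d (k := k)
    (L := (Submodule.span ℤ (Set.range B)).toAddSubgroup) hK.2.1 hK.balanced
    (fun x _ hx => by simpa using hx.fintype_card_le_finrank)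
    (fun j hj1 hjd => ⟨(hsucc j hj1 hjd).1, by linarith [(hsucc j hj1 hjd).2]⟩)
    (fun j _ _ r hr x hx hxΛK => succMin_le hr hx hxΛK)
  obtain ⟨𝒜, h𝒜, h𝒜cov, h𝒜card⟩ := hcov.exists_affineSubspace_cover
    (by rw [finrank_euclideanSpace_fin]; omega)
  refine ⟨𝒜, h𝒜, h𝒜cov, h𝒜card.trans (Finset.prod_div_le_pow_mul_inv ?_ (by simp) ?_)⟩
  · nlinarith [one_le_pow₀ (by norm_num : (1 : ℝ) ≤ 7) (n := d)]
  · intro j hj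
    obtain ⟨hj1, hjd⟩ := Finset.mem_Icc.mp hj
    exact (hsucc j (by omega) hjd).1

theorem statement5 (d k : ℕ) (hk1 : 1 ≤ k) (hkd : k + 1 ≤ d) :
    ∃ C : ℝ, 0 < C ∧
      ∀ (Λ K : Set (Euc d)), IsLattice Λ → IsSymmConvexBody K →
        succMin Λ K d ≤ 1 →
        ∃ S : Finset (AffineSubspace ℝ (Euc d)),
          (∀ A ∈ S, (A : Set (Euc d)).Nonempty ∧ Module.finrank ℝ A.direction = k) ∧
          (∀ x ∈ Λ ∩ K, ∃ A ∈ S, x ∈ A) ∧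
          (S.card : ℝ) ≤ C * (∏ i ∈ Finset.Icc (k+1) d, succMin Λ K i)⁻¹ :=
  statement5_general d k hkd
end
end

section
/- Let d and k be integers with 1 ≤ k ≤ d−1, let Λ be a d-dimensional lattice in ℝ^d, and set λ_i := λ_i(Λ,B^d) for i = 1,…,d. Let α := min_{d−k+1 ≤ i ≤ d} (λ_{d−i+1}·λ_{d−i+2}·⋯·λ_d)^{−1/(i−1)} and let q ∈ {d−k+1,…,d} be an index attaining this minimum, i.e., α = (λ_{d−q+1}·⋯·λ_d)^{−1/(q−1)}. If q ≥ d−k+2, then for every i ∈ {3,…,d−k+2} we have (λ_{d−i+2}·λ_{d−i+3}·⋯·λ_d)^{(q−i+1)/(i−2)} ≤ λ_{d−q+1}·λ_{d−q+2}·⋯·λ_{d−i+1}. -/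
open scoped BigOperators Pointwise
open Metric

noncomputable section

/-!
Write `P m = λ_{d-m+1} ⋯ λ_d` for the product of the `m` largest successive minima. Minimality
of `q` says `P m ^ (q-1) ≤ P q ^ (m-1)` for `d-k+1 ≤ m ≤ d`, and the claim is this same inequality
for `m = i - 1 ≤ d - k + 1`, after cancelling the common factor `P (i-1)` of both sides.
Taking `m = q - 1` gives `P q ≤ λ_{d-q+1} ^ (q-1) ≤ λ_j ^ (q-1)` for every `j ≥ d-q+1`; since
`P m = λ_{d-m+1} P (m-1)`, this lets the inequality descend from `m` to `m - 1`.
Positivity and monotonicity of the successive minima come from the discreteness of the lattice.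
-/

lemma IsLattice.exists_pos_le_norm {d : ℕ} {Λ : Set (Euc d)} (hΛ : IsLattice Λ) :
    ∃ ε > 0, ∀ x ∈ Λ, x ≠ 0 → ε ≤ ‖x‖ := by
  obtain ⟨b, hb, rfl⟩ := hΛ
  let B := basisOfLinearIndependentOfCardEqFinrank' b hb (by simp)
  obtain ⟨ε, hε, hball⟩ := Metric.isOpen_singleton_iff.mp
    (isOpen_discrete ({0} : Set (Submodule.span ℤ (Set.range B))))
  refine ⟨ε, hε, ?_⟩
  rintro x ⟨c, rfl⟩ hx
  have hmem : ∑ i, (c i : ℝ) • b i ∈ Submodule.span ℤ (Set.range B) :=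
    (Submodule.mem_span_range_iff_exists_fun ℤ).mpr
      ⟨c, by simp [B, basisOfLinearIndependentOfCardEqFinrank', Int.cast_smul_eq_zsmul]⟩
  by_contra! hlt
  exact hx (congrArg Subtype.val (hball ⟨_, hmem⟩ (by simpa using hlt)))

lemma mem_smul_unitBall {d : ℕ} {r : ℝ} (hr : 0 ≤ r) {x : Euc d} :
    x ∈ r • unitBall d ↔ ‖x‖ ≤ r := by
  rw [unitBall, smul_unitClosedBall_of_nonneg hr, mem_closedBall_zero_iff]

lemma IsLattice.exists_linearIndependent_mem {d : ℕ} {Λ : Set (Euc d)} (hΛ : IsLattice Λ)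
    {i : ℕ} (hi : i ≤ d) :
    ∃ r : ℝ, 0 < r ∧ ∃ v : Fin i → Euc d,
      LinearIndependent ℝ v ∧ ∀ j, v j ∈ Λ ∧ v j ∈ r • unitBall d := by
  obtain ⟨b, hb, rfl⟩ := hΛ
  have hr : 0 < ∑ j, ‖b j‖ + 1 := by positivity
  refine ⟨_, hr, b ∘ Fin.castLE hi, hb.comp _ (Fin.castLE_injective hi), fun j => ⟨?_, ?_⟩⟩
  · exact ⟨Pi.single (Fin.castLE hi j) 1, by simp [Pi.single_apply]⟩
  · rw [mem_smul_unitBall hr.le]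
    have := Finset.single_le_sum (fun t _ => norm_nonneg (b t)) (Finset.mem_univ (Fin.castLE hi j))
    simp only [Function.comp_apply]
    linarith

lemma IsLattice.succMin_pos {d : ℕ} {Λ : Set (Euc d)} (hΛ : IsLattice Λ) {i : ℕ}
    (h1 : 1 ≤ i) (hi : i ≤ d) : 0 < succMin Λ (unitBall d) i := by
  obtain ⟨ε, hε, hnorm⟩ := hΛ.exists_pos_le_norm
  refine hε.trans_le (le_csInf (hΛ.exists_linearIndependent_mem hi) ?_)
  rintro r ⟨hr, v, hv, hvΛ⟩
  let j₀ : Fin i := ⟨0, h1⟩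
  exact (hnorm _ (hvΛ j₀).1 (hv.ne_zero j₀)).trans ((mem_smul_unitBall hr.le).mp (hvΛ j₀).2)

lemma IsLattice.monotoneOn_succMin {d : ℕ} {Λ : Set (Euc d)} (hΛ : IsLattice Λ) :
    MonotoneOn (succMin Λ (unitBall d)) (Set.Iic d) := by
  intro i _ j hj hij
  refine csInf_le_csInf ⟨0, fun r hr => hr.1.le⟩ (hΛ.exists_linearIndependent_mem hj) ?_
  rintro r ⟨hr, v, hv, hvΛ⟩
  exact ⟨hr, v ∘ Fin.castLE hij, hv.comp _ (Fin.castLE_injective hij), fun t => hvΛ _⟩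

lemma rpow_neg_div_le_rpow_neg_div_iff {x y : ℝ} (hx : 0 < x) (hy : 0 < y) {a b : ℕ}
    (ha : 2 ≤ a) (hb : 2 ≤ b) :
    x ^ (-(1:ℝ)/((a:ℝ)-1)) ≤ y ^ (-(1:ℝ)/((b:ℝ)-1)) ↔ y ^ (a-1) ≤ x ^ (b-1) := by
  have hA : (0:ℝ) < (a:ℝ) - 1 := by
    have : (2:ℝ) ≤ a := by exact_mod_cast ha
    linarith
  have hB : (0:ℝ) < (b:ℝ) - 1 := by
    have : (2:ℝ) ≤ b := by exact_mod_cast hb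
    linarith
  rw [← Real.log_le_log_iff (Real.rpow_pos_of_pos hx _) (Real.rpow_pos_of_pos hy _),
    ← Real.log_le_log_iff (pow_pos hy _) (pow_pos hx _), Real.log_rpow hx, Real.log_rpow hy,
    Real.log_pow, Real.log_pow,
    Nat.cast_sub (by omega), Nat.cast_sub (by omega), Nat.cast_one,
    div_mul_eq_mul_div, div_mul_eq_mul_div, div_le_div_iff₀ hA hB]
  constructor <;> intro h <;> linarith

lemma rpow_div_le_of_pow_le {x y : ℝ} (hx : 0 ≤ x) (hy : 0 ≤ y) {s t : ℕ} (ht : 0 < t)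
    (h : x ^ s ≤ y ^ t) : x ^ ((s:ℝ) / t) ≤ y := by
  rwa [div_eq_mul_inv, Real.rpow_mul hx, Real.rpow_natCast,
    Real.rpow_inv_le_iff_of_pos (by positivity) hy (by exact_mod_cast ht), Real.rpow_natCast]

section OrderedSemiring

variable {R : Type*} [CommSemiring R] [LinearOrder R] [IsStrictOrderedRing R]

lemma pow_le_pow_of_pow_add_le_mul_pow {x y : R} (hx : 0 < x) {s t : ℕ}
    (h : x ^ (s + t) ≤ (y * x) ^ t) : x ^ s ≤ y ^ t := by
  rw [pow_add, mul_pow] at h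
  exact le_of_mul_le_mul_right h (pow_pos hx t)

lemma pow_le_pow_of_mul_pow_le {x c G : R} (hc : 0 < c) (hG : 0 ≤ G) {n m : ℕ}
    (hGc : G ≤ c ^ n) (h : (c * x) ^ n ≤ G ^ (m + 1)) : x ^ n ≤ G ^ m := by
  refine le_of_mul_le_mul_left ?_ (pow_pos hc n)
  calc c ^ n * x ^ n = (c * x) ^ n := (mul_pow c x n).symm
    _ ≤ G ^ m * G := by rwa [← pow_succ]
    _ ≤ G ^ m * c ^ n := by gcongr
    _ = c ^ n * G ^ m := mul_comm _ _

end OrderedSemiring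

lemma Finset.prod_Icc_mul_prod_Icc {M : Type*} [CommMonoid M] (f : ℕ → M) {a b c : ℕ}
    (hab : a ≤ b) (hbc : b ≤ c) :
    (∏ j ∈ Icc (a + 1) b, f j) * ∏ j ∈ Icc (b + 1) c, f j = ∏ j ∈ Icc (a + 1) c, f j := by
  simp only [Finset.Icc_add_one_left_eq_Ioc]
  exact prod_Ioc_consecutive f hab hbc

def tailProd (a : ℕ → ℝ) (d m : ℕ) : ℝ := ∏ j ∈ Finset.Icc (d - m + 1) d, a j

namespace tailProd

variable {a : ℕ → ℝ} {d : ℕ}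

lemma eq_mul {m n : ℕ} (hmn : m ≤ n) (hn : n ≤ d) :
    tailProd a d n = (∏ j ∈ Finset.Icc (d - n + 1) (d - m), a j) * tailProd a d m := by
  rw [tailProd, tailProd, ← Finset.prod_Icc_mul_prod_Icc a (by omega : d - n ≤ d - m) (by omega)]

lemma succ_eq_mul {m : ℕ} (hm : m < d) : tailProd a d (m + 1) = a (d - m) * tailProd a d m := by
  rw [eq_mul (Nat.le_succ m) hm, show d - (m + 1) + 1 = d - m by omega, Finset.Icc_self,
    Finset.prod_singleton]

variable (hpos : ∀ j ∈ Finset.Icc 1 d, 0 < a j)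
include hpos

lemma pos (m : ℕ) : 0 < tailProd a d m :=
  Finset.prod_pos fun j hj => hpos j (by simp only [Finset.mem_Icc] at hj ⊢; omega)

lemma le_pow_of_pow_le (hmono : MonotoneOn a (Set.Icc 1 d)) {q : ℕ} (hq : 2 ≤ q) (hqd : q ≤ d)
    (h : tailProd a d (q - 1) ^ (q - 1) ≤ tailProd a d q ^ (q - 2)) :
    ∀ j, d - q + 1 ≤ j → j ≤ d → tailProd a d q ≤ a j ^ (q - 1) := by
  intro j hj hjd
  obtain ⟨n, rfl⟩ : ∃ n, q = n + 2 := ⟨q - 2, by omega⟩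
  simp only [Nat.add_sub_cancel, show n + 2 - 1 = n + 1 by omega] at h ⊢
  have hsucc : tailProd a d (n + 2) = a (d - (n + 1)) * tailProd a d (n + 1) :=
    succ_eq_mul (by omega)
  have hc : 0 < a (d - (n + 1)) := hpos _ (by simp only [Finset.mem_Icc]; omega)
  rw [hsucc] at h
  rw [hsucc]
  calc a (d - (n + 1)) * tailProd a d (n + 1) ≤ a (d - (n + 1)) * a (d - (n + 1)) ^ n := by
        gcongr
        simpa using pow_le_pow_of_pow_add_le_mul_pow (s := 1) (pos hpos _) (by rwa [add_comm 1 n])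
    _ = a (d - (n + 1)) ^ (n + 1) := (pow_succ' _ _).symm
    _ ≤ a j ^ (n + 1) := by
        gcongr
        exact hmono (by simp only [Set.mem_Icc]; omega) (by simp only [Set.mem_Icc]; omega) (by omega)

lemma pow_le_pow_of_le {q : ℕ} (hqd : q ≤ d)
    (hbound : ∀ j, d - q + 1 ≤ j → j ≤ d → tailProd a d q ≤ a j ^ (q - 1)) {m₀ : ℕ} (hm₀ : m₀ < q)
    (h₀ : tailProd a d m₀ ^ (q - 1) ≤ tailProd a d q ^ (m₀ - 1)) {m : ℕ} (hm : 1 ≤ m)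
    (hmm₀ : m ≤ m₀) : tailProd a d m ^ (q - 1) ≤ tailProd a d q ^ (m - 1) := by
  induction hmm₀ using Nat.decreasingInduction with
  | self => exact h₀
  | of_succ k hk ih =>
    obtain ⟨l, rfl⟩ : ∃ l, k = l + 1 := ⟨k - 1, by omega⟩
    rw [succ_eq_mul (by omega)] at ih
    exact pow_le_pow_of_mul_pow_le (hpos _ (by simp only [Finset.mem_Icc]; omega))
      (pos hpos q).le (hbound _ (by omega) (by omega)) (ih (by omega))

end tailProd

theorem statement14 (d k : ℕ)
    (Λ : Set (Euc d)) (hΛ : IsLattice Λ)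
    (q : ℕ) (hq2 : q ≤ d) (hq3 : d - k + 2 ≤ q)
    (α : ℝ)
    (hmin : α = (Finset.Icc (d - k + 1) d).inf' (Finset.nonempty_Icc.mpr (by omega))
      (fun i => (∏ j ∈ Finset.Icc (d - i + 1) d, succMin Λ (unitBall d) j)
        ^ (-(1:ℝ)/((i:ℝ)-1))))
    (hattain : α = (∏ j ∈ Finset.Icc (d - q + 1) d, succMin Λ (unitBall d) j)
        ^ (-(1:ℝ)/((q:ℝ)-1))) :
    ∀ i ∈ Finset.Icc 3 (d - k + 2),
      (∏ j ∈ Finset.Icc (d - i + 2) d, succMin Λ (unitBall d) j)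
          ^ (((q:ℝ)-(i:ℝ)+1)/((i:ℝ)-2)) ≤
        ∏ j ∈ Finset.Icc (d - q + 1) (d - i + 1), succMin Λ (unitBall d) j := by
  intro i hi
  simp only [Finset.mem_Icc] at hi
  set L := succMin Λ (unitBall d)
  have hpos : ∀ j ∈ Finset.Icc 1 d, 0 < L j := fun j hj =>
    hΛ.succMin_pos (Finset.mem_Icc.mp hj).1 (Finset.mem_Icc.mp hj).2
  have hmono : MonotoneOn L (Set.Icc 1 d) :=
    hΛ.monotoneOn_succMin.mono fun j hj => hj.2
  have hcomp : ∀ m ∈ Finset.Icc (d - k + 1) d,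
      tailProd L d m ^ (q - 1) ≤ tailProd L d q ^ (m - 1) := fun m hm => by
    rw [← rpow_neg_div_le_rpow_neg_div_iff (tailProd.pos hpos q) (tailProd.pos hpos m)
      (by omega) (by simp only [Finset.mem_Icc] at hm; omega), tailProd, tailProd, ← hattain, hmin]
    exact Finset.inf'_le _ hm
  have hbound := tailProd.le_pow_of_pow_le hpos hmono (by omega) hq2
    (hcomp (q - 1) (by simp only [Finset.mem_Icc]; omega))
  have hdescent := tailProd.pow_le_pow_of_le hpos hq2 hbound (m₀ := d - k + 1) (by omega)
    (hcomp _ (by simp only [Finset.mem_Icc]; omega)) (m := i - 1) (by omega) (by omega)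
  rw [tailProd.eq_mul (m := i - 1) (by omega) hq2, show q - 1 = (q - i + 1) + (i - 2) by omega,
    show i - 1 - 1 = i - 2 by omega] at hdescent
  have hcancel := pow_le_pow_of_pow_add_le_mul_pow (tailProd.pos hpos _) hdescent
  rw [show d - (i - 1) = d - i + 1 by omega] at hcancel
  have hexp : ((q:ℝ) - i + 1) / (i - 2) = ((q - i + 1 : ℕ) : ℝ) / ((i - 2 : ℕ) : ℝ) := by
    push_cast [Nat.cast_sub (by omega : i ≤ q), Nat.cast_sub (by omega : 2 ≤ i)]
    ring
  rw [hexp, show d - i + 2 = d - (i - 1) + 1 by omega]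
  exact rpow_div_le_of_pow_le (tailProd.pos hpos _).le
    (Finset.prod_pos fun j hj => hpos j (by simp only [Finset.mem_Icc] at hj ⊢; omega)).le
    (by omega) hcancel
end
end

section
/- Let d and k be integers with 2 ≤ k ≤ d−2 and let ε ∈ (0,1). There is a positive integer p_0 = p_0(d,ε,k) such that for every prime number p ≥ p_0 there exists a subset R of 𝔽_p^{d−1} of size at least p^{d−k−ε}/2 such that every (k−1)-dimensional affine subspace of 𝔽_p^{d−1} contains at most r−1 points of R, where r := ⌈k(d−k+1)/ε⌉. -/
open scoped BigOperators Pointwise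
open Metric

noncomputable section

/-!
Alteration. Call an `r`-subset of `V = 𝔽_p^{d-1}` degenerate if its affine span has dimension
at most `k - 1`. A degenerate set is `k` points spanning it together with `r - k` points of an
affine subspace of size at most `p^(k-1)`, so there are at most `p^((d-1)k) · p^((k-1)(r-k))`
of them. A fixed `r`-set lies in a proportion `C(N, r) / C(n, r) ≈ (N / n)^r` of the `N`-subsets
of `V`, where `n = p^(d-1)`. For `N ≈ p^(d-k-ε)` the choice `εr ≥ k(d-k+1)` makes the number of
degenerate sets times this proportion less than one, so some `N`-set contains no degenerate
set, i.e. meets every `(k-1)`-dimensional affine subspace in fewer than `r` points. The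
constant factors lost in these estimates are absorbed by taking `p ≥ 2^(r+1)`.
-/

open Finset Module

theorem Finset.card_filter_powersetCard_superset_le {α : Type*} [DecidableEq α]
    (T U : Finset α) (n : ℕ) :
    #{R ∈ powersetCard n U | T ⊆ R} ≤ (#(U \ T)).choose (n - #T) := by
  calc #{R ∈ powersetCard n U | T ⊆ R}
      ≤ #((powersetCard (n - #T) (U \ T)).image (· ∪ T)) := by
        refine card_le_card fun R hR => ?_
        obtain ⟨hRU, hRn⟩ := mem_powersetCard.mp (mem_filter.mp hR).1
        have hTR := (mem_filter.mp hR).2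
        refine mem_image.mpr ⟨R \ T, ?_, sdiff_union_of_subset hTR⟩
        exact mem_powersetCard.mpr
          ⟨sdiff_subset_sdiff hRU le_rfl, by rw [card_sdiff_of_subset hTR, hRn]⟩
    _ ≤ (#(U \ T)).choose (n - #T) := card_image_le.trans (card_powersetCard _ _).le

theorem Finset.exists_card_eq_forall_not_subset {α : Type*} [Fintype α] [DecidableEq α]
    (𝒯 : Finset (Finset α)) {r N : ℕ} (h𝒯 : ∀ T ∈ 𝒯, #T = r) (hrN : r ≤ N)
    (hN : N ≤ Fintype.card α) (h : #𝒯 * N.choose r < (Fintype.card α).choose r) :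
    ∃ R : Finset α, #R = N ∧ ∀ T ∈ 𝒯, ¬ T ⊆ R := by
  set n := Fintype.card α
  have hcount : #𝒯 * (n - r).choose (N - r) < n.choose N := by
    refine Nat.lt_of_mul_lt_mul_right (a := N.choose r) ?_
    calc #𝒯 * (n - r).choose (N - r) * N.choose r
        = #𝒯 * N.choose r * (n - r).choose (N - r) := by ring
      _ < n.choose r * (n - r).choose (N - r) :=
        Nat.mul_lt_mul_of_pos_right h (Nat.choose_pos (by omega))
      _ = n.choose N * N.choose r := (Nat.choose_mul hrN).symm
  have hcover :
      #{R ∈ powersetCard N univ | ∃ T ∈ 𝒯, T ⊆ R} ≤ #𝒯 * (n - r).choose (N - r) := by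
    calc #{R ∈ powersetCard N univ | ∃ T ∈ 𝒯, T ⊆ R}
        ≤ #(𝒯.biUnion fun T => {R ∈ powersetCard N univ | T ⊆ R}) := by
          refine card_le_card fun R hR => ?_
          obtain ⟨hR, T, hT, hTR⟩ := mem_filter.mp hR
          exact mem_biUnion.mpr ⟨T, hT, mem_filter.mpr ⟨hR, hTR⟩⟩
      _ ≤ ∑ T ∈ 𝒯, #{R ∈ powersetCard N univ | T ⊆ R} := card_biUnion_le
      _ ≤ ∑ T ∈ 𝒯, (n - r).choose (N - r) := sum_le_sum fun T hT => by
          simpa [card_sdiff_of_subset (subset_univ T), h𝒯 T hT] using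
            card_filter_powersetCard_superset_le T univ N
      _ = #𝒯 * (n - r).choose (N - r) := by rw [sum_const, smul_eq_mul]
  obtain ⟨R, hR, hRgood⟩ := exists_mem_notMem_of_card_lt_card
    (hcover.trans_lt (by rwa [card_powersetCard, card_univ]))
  refine ⟨R, (mem_powersetCard.mp hR).2, fun T hT hTR => hRgood ?_⟩
  exact mem_filter.mpr ⟨hR, T, hT, hTR⟩

theorem Nat.mul_choose_lt_choose_of_mul_pow_lt {a N n r : ℕ} (h : a * N ^ r < (n + 1 - r) ^ r) :
    a * N.choose r < n.choose r := by
  refine Nat.lt_of_mul_lt_mul_left (a := r.factorial) ?_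
  calc r.factorial * (a * N.choose r) = a * N.descFactorial r := by
        rw [descFactorial_eq_factorial_mul_choose]; ring
    _ ≤ a * N ^ r := Nat.mul_le_mul_left _ (descFactorial_le_pow N r)
    _ < (n + 1 - r) ^ r := h
    _ ≤ n.descFactorial r := pow_sub_le_descFactorial n r
    _ = r.factorial * n.choose r := descFactorial_eq_factorial_mul_choose n r

theorem Nat.floor_rpow_pow_le {p e r : ℕ} {c : ℝ} (hp : 1 ≤ p) (hc : c * r ≤ e) :
    ⌊(p : ℝ) ^ c⌋₊ ^ r ≤ p ^ e := by
  have hx : (1 : ℝ) ≤ p := by exact_mod_cast hp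
  have : (⌊(p : ℝ) ^ c⌋₊ : ℝ) ^ r ≤ (p : ℝ) ^ e :=
    calc (⌊(p : ℝ) ^ c⌋₊ : ℝ) ^ r ≤ ((p : ℝ) ^ c) ^ r :=
          pow_le_pow_left₀ (by positivity) (Nat.floor_le (by positivity)) r
      _ = (p : ℝ) ^ (c * r) := by rw [← Real.rpow_natCast, ← Real.rpow_mul (by positivity)]
      _ ≤ (p : ℝ) ^ (e : ℝ) := Real.rpow_le_rpow_of_exponent_le hx hc
      _ = (p : ℝ) ^ e := Real.rpow_natCast _ _
  exact_mod_cast this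

theorem Nat.pow_mul_pow_mul_pow_lt {p a k b s e r N : ℕ} (hp : 2 ^ (r + 1) ≤ p) (ha : 1 ≤ a)
    (hN : N ^ r ≤ p ^ e) (hexp : a * k + b * s + e + 1 ≤ a * r) :
    (p ^ a) ^ k * (p ^ b) ^ s * N ^ r < (p ^ a + 1 - r) ^ r := by
  have hr : 2 ^ r < p := (Nat.pow_lt_pow_right (by norm_num) r.lt_succ_self).trans_le hp
  have hp0 : 0 < p := (Nat.zero_le _).trans_lt hr
  have hpa : p ≤ p ^ a := Nat.le_self_pow (by omega) p
  have hhalf : p ^ a ≤ 2 * (p ^ a + 1 - r) := by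
    have : 2 * r < 2 ^ (r + 1) := by rw [pow_succ]; linarith [r.lt_two_pow_self]
    omega
  refine Nat.lt_of_mul_lt_mul_left (a := 2 ^ r) ?_
  calc 2 ^ r * ((p ^ a) ^ k * (p ^ b) ^ s * N ^ r)
      ≤ 2 ^ r * p ^ (a * k + b * s + e) := by
        rw [pow_add, pow_add, pow_mul, pow_mul]
        exact Nat.mul_le_mul_left _ (Nat.mul_le_mul_left _ hN)
    _ < p * p ^ (a * k + b * s + e) := Nat.mul_lt_mul_of_pos_right hr (Nat.pow_pos hp0)
    _ ≤ p ^ (a * r) := by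
        rw [← pow_succ']; exact Nat.pow_le_pow_right hp0 (by omega)
    _ = (p ^ a) ^ r := pow_mul p a r
    _ ≤ (2 * (p ^ a + 1 - r)) ^ r := Nat.pow_le_pow_left hhalf r
    _ = 2 ^ r * (p ^ a + 1 - r) ^ r := mul_pow 2 _ r

section AffineSubspace

variable {K V : Type*} [Field K] [AddCommGroup V] [Module K V]

theorem AffineSubspace.ncard_le [Finite K] [Finite V] (A : AffineSubspace K V) :
    (A : Set V).ncard ≤ Nat.card K ^ finrank K A.direction := by
  rcases (A : Set V).eq_empty_or_nonempty with h | ⟨a, ha⟩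
  · simp [h]
  · have : Nonempty A := ⟨⟨a, ha⟩⟩
    rw [← Module.natCard_eq_pow_finrank, ← Nat.card_coe_set_eq,
      Nat.card_congr (Equiv.vaddConst (⟨a, ha⟩ : A))]
    exact le_rfl

theorem Finset.exists_subset_card_eq_subset_affineSpan {T : Finset V} {m : ℕ}
    (hdim : finrank K (vectorSpan K (T : Set V)) ≤ m) (hT : m + 1 ≤ #T) :
    ∃ S ⊆ T, #S = m + 1 ∧ (T : Set V) ⊆ affineSpan K (S : Set V) := by
  obtain ⟨t, htT, hspan, hind⟩ := exists_affineIndependent K V (T : Set V)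
  lift t to Finset V using T.finite_toSet.subset htT
  have ht : #t ≤ m + 1 := by
    have := hind.card_le_finrank_succ
    rw [Subtype.range_coe, ← direction_affineSpan, hspan, direction_affineSpan] at this
    simp only [coe_sort_coe, Fintype.card_coe] at this
    omega
  obtain ⟨S, htS, hST, hS⟩ := exists_subsuperset_card_eq (coe_subset.mp htT) ht hT
  refine ⟨S, hST, hS, ?_⟩
  calc (T : Set V) ⊆ affineSpan K (T : Set V) := subset_affineSpan K _
    _ = affineSpan K (t : Set V) := by rw [hspan]
    _ ≤ affineSpan K (S : Set V) := affineSpan_mono K (coe_subset.mpr htS)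

variable (K V) in
def degenerateSubsets [Fintype V] [DecidableEq V] (r m : ℕ) : Finset (Finset V) :=
  (powersetCard r univ).filter fun T => finrank K (vectorSpan K (T : Set V)) ≤ m

theorem mem_degenerateSubsets [Fintype V] [DecidableEq V] {r m : ℕ} {T : Finset V} :
    T ∈ degenerateSubsets K V r m ↔ #T = r ∧ finrank K (vectorSpan K (T : Set V)) ≤ m := by
  simp [degenerateSubsets]

theorem card_degenerateSubsets_le [Fintype K] [Fintype V] [DecidableEq V] {r m : ℕ}
    (hmr : m + 1 ≤ r) :
    #(degenerateSubsets K V r m)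
      ≤ Fintype.card V ^ (m + 1) * (Fintype.card K ^ m) ^ (r - (m + 1)) := by
  classical
  let span (S : Finset V) : Finset V := (affineSpan K (S : Set V) : Set V).toFinset
  have hspan (S : Finset V) (hS : #S = m + 1) : #(span S) ≤ Fintype.card K ^ m := by
    rw [← Set.ncard_eq_toFinset_card', ← Nat.card_eq_fintype_card]
    refine (AffineSubspace.ncard_le _).trans (Nat.pow_le_pow_right Nat.card_pos ?_)
    rw [direction_affineSpan, ← image_id (s := S)]
    exact finrank_vectorSpan_image_finset_le K id S hS
  calc #(degenerateSubsets K V r m)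
      ≤ #((powersetCard (m + 1) univ).biUnion
          fun S => {T ∈ powersetCard r (span S) | S ⊆ T}) := by
        refine card_le_card fun T hT => ?_
        obtain ⟨hTr, hdim⟩ := mem_degenerateSubsets.mp hT
        obtain ⟨S, hST, hS, hTS⟩ := exists_subset_card_eq_subset_affineSpan hdim (hTr ▸ hmr)
        refine mem_biUnion.mpr ⟨S, mem_powersetCard.mpr ⟨subset_univ S, hS⟩, ?_⟩
        refine mem_filter.mpr ⟨mem_powersetCard.mpr ⟨fun x hx => ?_, hTr⟩, hST⟩
        simpa [span] using hTS hx
    _ ≤ ∑ S ∈ powersetCard (m + 1) univ, #{T ∈ powersetCard r (span S) | S ⊆ T} :=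
        card_biUnion_le
    _ ≤ ∑ S ∈ powersetCard (m + 1) (univ : Finset V), (Fintype.card K ^ m) ^ (r - (m + 1)) := by
        refine sum_le_sum fun S hS => ?_
        have hS := (mem_powersetCard.mp hS).2
        calc #{T ∈ powersetCard r (span S) | S ⊆ T}
            ≤ (#(span S \ S)).choose (r - (m + 1)) := by
              simpa [hS] using card_filter_powersetCard_superset_le S (span S) r
          _ ≤ #(span S \ S) ^ (r - (m + 1)) := Nat.choose_le_pow _ _
          _ ≤ (Fintype.card K ^ m) ^ (r - (m + 1)) :=
              Nat.pow_le_pow_left ((card_le_card sdiff_subset).trans (hspan S hS)) _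
    _ ≤ Fintype.card V ^ (m + 1) * (Fintype.card K ^ m) ^ (r - (m + 1)) := by
        rw [sum_const, card_powersetCard, card_univ, smul_eq_mul]
        exact Nat.mul_le_mul_right _ (Nat.choose_le_pow _ _)

theorem exists_finset_card_eq_ncard_inter_affineSubspace_lt [Fintype K] [Fintype V] {m r N : ℕ}
    (hmr : m + 1 ≤ r) (hrN : r ≤ N)
    (h : Fintype.card V ^ (m + 1) * (Fintype.card K ^ m) ^ (r - (m + 1)) * N ^ r
      < (Fintype.card V + 1 - r) ^ r) :
    ∃ R : Finset V, #R = N ∧ ∀ A : AffineSubspace K V,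
      finrank K A.direction ≤ m → ((R : Set V) ∩ A).ncard < r := by
  classical
  have hN : N ≤ Fintype.card V := by
    have : N ^ r < (Fintype.card V + 1 - r) ^ r :=
      (Nat.le_mul_of_pos_left _ (by positivity)).trans_lt h
    have := (Nat.pow_lt_pow_iff_left (by omega)).mp this
    omega
  obtain ⟨R, hR, hRdeg⟩ := exists_card_eq_forall_not_subset (degenerateSubsets K V r m)
    (fun T hT => (mem_degenerateSubsets.mp hT).1) hrN hN
    (Nat.mul_choose_lt_choose_of_mul_pow_lt
      ((Nat.mul_le_mul_right _ (card_degenerateSubsets_le hmr)).trans_lt h))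
  refine ⟨R, hR, fun A hA => ?_⟩
  by_contra! hle
  have hRA : (R : Set V) ∩ A = ↑(R.filter (· ∈ A)) := by ext; simp
  rw [hRA, Set.ncard_coe_finset] at hle
  obtain ⟨T, hT, hTr⟩ := exists_subset_card_eq hle
  have hTA : vectorSpan K (T : Set V) ≤ A.direction := by
    rw [← direction_affineSpan]
    exact AffineSubspace.direction_le (affineSpan_le.mpr fun x hx => (mem_filter.mp (hT hx)).2)
  exact hRdeg T (mem_degenerateSubsets.mpr ⟨hTr, (Submodule.finrank_mono hTA).trans hA⟩)
    (hT.trans (filter_subset _ R))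

theorem exists_finset_card_eq_ncard_inter_affineSubspace_lt_of_pow_le [Fintype K]
    {n k r N e : ℕ} (hk : 1 ≤ k) (hkr : k ≤ r) (hn : 1 ≤ n)
    (hK : 2 ^ (r + 1) ≤ Fintype.card K) (hKN : Fintype.card K ≤ N) (hN : N ^ r ≤ Fintype.card K ^ e)
    (hexp : n * k + (k - 1) * (r - k) + e + 1 ≤ n * r) :
    ∃ R : Finset (Fin n → K), #R = N ∧ ∀ A : AffineSubspace K (Fin n → K),
      finrank K A.direction ≤ k - 1 → ((R : Set (Fin n → K)) ∩ A).ncard < r := by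
  obtain ⟨m, rfl⟩ : ∃ m, k = m + 1 := ⟨k - 1, by omega⟩
  have hrK : r < 2 ^ (r + 1) :=
    r.lt_two_pow_self.trans (Nat.pow_lt_pow_right (by norm_num) r.lt_succ_self)
  refine exists_finset_card_eq_ncard_inter_affineSubspace_lt hkr (by omega) ?_
  rw [Fintype.card_fun, Fintype.card_fin]
  exact Nat.pow_mul_pow_mul_pow_lt hK hn hN hexp

end AffineSubspace

theorem statement16 (d k : ℕ) (hk2 : 2 ≤ k) (hkd : k + 2 ≤ d)
    (ε : ℝ) (hε : ε ∈ Set.Ioo (0:ℝ) 1) :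
    ∃ p₀ : ℕ, 0 < p₀ ∧
      ∀ p : ℕ, p.Prime → p₀ ≤ p →
        ∃ R : Finset (Fin (d-1) → ZMod p),
          (p:ℝ) ^ ((d:ℝ) - (k:ℝ) - ε) / 2 ≤ (R.card : ℝ) ∧
          ∀ A : AffineSubspace (ZMod p) (Fin (d-1) → ZMod p),
            (A : Set (Fin (d-1) → ZMod p)).Nonempty →
            Module.finrank (ZMod p) A.direction = k - 1 →
            ((R : Set (Fin (d-1) → ZMod p)) ∩ (A : Set (Fin (d-1) → ZMod p))).ncard ≤
              ⌈((k:ℝ) * ((d:ℝ) - (k:ℝ) + 1)) / ε⌉₊ - 1 := by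
  obtain ⟨hε0, hε1⟩ := hε
  set r := ⌈((k:ℝ) * ((d:ℝ) - (k:ℝ) + 1)) / ε⌉₊
  have hkd' : ((d - k : ℕ) : ℝ) = d - k := Nat.cast_sub (by omega)
  have hεr : (k : ℝ) * (d - k + 1) ≤ ε * r := (div_le_iff₀' hε0).mp (Nat.le_ceil _)
  have hr : k * (d - k + 1) ≤ r := by
    have : ((k * (d - k + 1) : ℕ) : ℝ) ≤ r := by
      push_cast [hkd']
      exact hεr.trans (mul_le_of_le_one_left (Nat.cast_nonneg r) hε1.le)
    exact_mod_cast this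
  have hdkr : k * (d - k + 1) ≤ (d - k) * r := hr.trans (Nat.le_mul_of_pos_left r (by omega))
  have hkr : k ≤ r := (Nat.le_mul_of_pos_right k (by omega)).trans hr
  refine ⟨2 ^ (r + 1), by positivity, fun p hp hp₀ => ?_⟩
  have : Fact p.Prime := ⟨hp⟩
  have hp1 : (1 : ℝ) ≤ p := by exact_mod_cast hp.one_le
  have hc : 1 ≤ (d : ℝ) - k - ε := by
    have : (k : ℝ) + 2 ≤ d := by exact_mod_cast hkd
    linarith
  set N := ⌊(p : ℝ) ^ ((d : ℝ) - k - ε)⌋₊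
  have hN : N ^ r ≤ p ^ ((d - k) * r - k * (d - k + 1)) := by
    refine Nat.floor_rpow_pow_le hp.one_le ?_
    push_cast [Nat.cast_sub hdkr, hkd']
    linarith
  have hexp : (d - 1) * k + (k - 1) * (r - k) + ((d - k) * r - k * (d - k + 1)) + 1
      ≤ (d - 1) * r := by
    zify [hdkr, hkr, (by omega : 1 ≤ d), (by omega : 1 ≤ k), (by omega : k ≤ d)]
    linarith
  obtain ⟨R, hR, hRA⟩ := exists_finset_card_eq_ncard_inter_affineSubspace_lt_of_pow_le
    (K := ZMod p) (N := N) (by omega) hkr (by omega) (by rwa [ZMod.card])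
    (by rw [ZMod.card]; exact Nat.le_floor (Real.self_le_rpow_of_one_le hp1 hc))
    (by rwa [ZMod.card]) hexp
  refine ⟨R, ?_, fun A _ hA => Nat.le_sub_one_of_lt (hRA A hA.le)⟩
  rw [hR]
  exact (Nat.div_two_lt_floor (Real.one_le_rpow hp1 (by linarith))).le
end
end

section
/- Let d, k, r_1, r_2 be positive integers with 0 ≤ k ≤ d−2. Let P ⊆ ℝ^d be a finite set of points such that every k-dimensional affine subspace of ℝ^d contains at most r_1−1 points of P, let N ⊆ ℝ^d∖{0} be a finite set such that every (d−k−1)-dimensional linear subspace of ℝ^d contains at most r_2−1 points of N, and let H be a finite set of hyperplanes in ℝ^d each of which has its normal vector in N. Then there do not exist r_1 points of P and r_2 distinct hyperplanes of H such that each of these points lies on each of these hyperplanes; that is, K_{r_1,r_2} ⊄ G(P,H). -/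
/-!
Take `r₁` points on `r₂` common hyperplanes and let `W` be the span of the normals of these
hyperplanes. Hyperplanes through a common point with the same normal coincide, so the `r₂`
normals are distinct. If `dim W ≤ d - k - 1`, they lie in a `(d - k - 1)`-dimensional subspace,
contradicting the hypothesis on `N`. Otherwise all the points lie in `p + Wᗮ`, a flat of
dimension at most `k`, hence in a `k`-flat, contradicting the hypothesis on `P`.
-/

open scoped BigOperators Pointwise
open Metric

noncomputable section

open Module Submodule

theorem Finset.card_le_ncard_inter {α : Type*} {s t : Finset α} {X : Set α}
    (hst : s ⊆ t) (hsX : (s : Set α) ⊆ X) : s.card ≤ ((t : Set α) ∩ X).ncard := by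
  rw [← Set.ncard_coe_finset]
  exact Set.ncard_le_ncard (Set.subset_inter (Finset.coe_subset.2 hst) hsX)
    (t.finite_toSet.inter_of_left X)

section Extension

variable {K V : Type*} [DivisionRing K] [AddCommGroup V] [Module K V] [FiniteDimensional K V]

theorem Submodule.exists_le_finrank_eq_s18 (W : Submodule K V) {n : ℕ}
    (hWn : finrank K W ≤ n) (hn : n ≤ finrank K V) :
    ∃ W' : Submodule K V, W ≤ W' ∧ finrank K W' = n := by
  induction n, hWn using Nat.le_induction with
  | base => exact ⟨W, le_rfl, rfl⟩
  | succ n _ ih =>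
    obtain ⟨W', hWW', hW'⟩ := ih (by omega)
    obtain ⟨x, hx⟩ : ∃ x, x ∉ W' := by
      by_contra! h
      have := finrank_top K V
      rw [eq_top_iff'.2 h] at hW'
      omega
    have hx0 : x ≠ 0 := fun h => hx (h ▸ W'.zero_mem)
    refine ⟨W' ⊔ K ∙ x, hWW'.trans le_sup_left, ?_⟩
    have hdisj : W' ⊓ K ∙ x = ⊥ := ((disjoint_span_singleton' hx0).2 hx).eq_bot
    have := finrank_sup_add_finrank_inf_eq W' (K ∙ x)
    rw [hdisj, finrank_bot, finrank_span_singleton hx0, hW'] at this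
    omega

theorem AffineSubspace.exists_mk'_le_finrank_direction_eq (p : V) (U : Submodule K V) {n : ℕ}
    (hUn : finrank K U ≤ n) (hn : n ≤ finrank K V) :
    ∃ A : AffineSubspace K V, mk' p U ≤ A ∧ (A : Set V).Nonempty ∧ finrank K A.direction = n := by
  obtain ⟨U', hUU', hU'⟩ := U.exists_le_finrank_eq_s18 hUn hn
  exact ⟨mk' p U', (mk'_le_mk'_iff p).2 hUU', ⟨p, self_mem_mk' p U'⟩, by rwa [direction_mk']⟩

end Extension

theorem sub_mem_orthogonal_span_of_inner_eq {E ι : Type*} [NormedAddCommGroup E]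
    [InnerProductSpace ℝ E] {z : ι → E} {b : ι → ℝ} {p q : E}
    (hp : ∀ i, inner ℝ p (z i) = b i) (hq : ∀ i, inner ℝ q (z i) = b i) :
    p - q ∈ (span ℝ (Set.range z))ᗮ := by
  refine (span_singleton_le_iff_mem _ _).1 (isOrtho_iff_le.1 (isOrtho_span.2 ?_))
  rintro _ rfl _ ⟨i, rfl⟩
  rw [inner_sub_left, hp, hq, sub_self]

theorem statement18_general (d k r₁ r₂ : ℕ) (hr₁ : 0 < r₁) (hr₂ : 0 < r₂) (hkd : k + 2 ≤ d)
    (P : Finset (Euc d)) (N : Finset (Euc d))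
    (hP : ∀ A : AffineSubspace ℝ (Euc d), (A : Set (Euc d)).Nonempty →
      Module.finrank ℝ A.direction = k →
      ((P : Set (Euc d)) ∩ (A : Set (Euc d))).ncard ≤ r₁ - 1)
    (hN : ∀ W : Submodule ℝ (Euc d), Module.finrank ℝ W = d - k - 1 →
      ((N : Set (Euc d)) ∩ (W : Set (Euc d))).ncard ≤ r₂ - 1)
    (H : Finset (AffineSubspace ℝ (Euc d)))
    (hH : ∀ h ∈ H, ∃ z ∈ N, ∃ b : ℝ, (h : Set (Euc d)) = {x : Euc d | (inner ℝ x z : ℝ) = b}) :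
    ¬ HasKrr P H r₁ r₂ := by
  classical
  rintro ⟨P', H', hP'P, hH'H, hcP, hcH, hall⟩
  choose z hzN b hb using fun h : H' => hH h (hH'H h.2)
  have hinc : ∀ p ∈ P', ∀ h : H', inner ℝ p (z h) = b h := fun p hp h => by
    simpa [← SetLike.mem_coe, hb h] using hall p hp h h.2
  obtain ⟨p₀, hp₀⟩ := Finset.card_pos.1 (hcP ▸ hr₁)
  have hz : Function.Injective z := fun h₁ h₂ he => Subtype.ext <| SetLike.coe_injective <| by
    rw [hb, hb, he, ← hinc p₀ hp₀ h₁, ← hinc p₀ hp₀ h₂, he]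
  set W := span ℝ (Set.range z)
  have hd : finrank ℝ (Euc d) = d := finrank_euclideanSpace_fin
  rcases le_or_gt (finrank ℝ W) (d - k - 1) with hW | hW
  · obtain ⟨W', hWW', hW'⟩ := W.exists_le_finrank_eq_s18 hW (by omega)
    have : r₂ ≤ ((N : Set (Euc d)) ∩ W').ncard := by
      rw [← hcH, ← H'.card_attach, ← Finset.card_image_of_injective _ hz]
      refine Finset.card_le_ncard_inter (fun x hx => ?_) (fun x hx => ?_) <;>
        obtain ⟨h, -, rfl⟩ := Finset.mem_image.1 hx
      exacts [hzN h, hWW' (subset_span (Set.mem_range_self h))]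
    have := hN W' hW'
    omega
  · have hWperp : finrank ℝ Wᗮ ≤ k := by
      have := W.finrank_add_finrank_orthogonal
      omega
    obtain ⟨A, hA, hAne, hAk⟩ :=
      AffineSubspace.exists_mk'_le_finrank_direction_eq p₀ Wᗮ hWperp (by omega)
    have : r₁ ≤ ((P : Set (Euc d)) ∩ A).ncard := by
      rw [← hcP]
      exact Finset.card_le_ncard_inter hP'P fun p hp => hA <| AffineSubspace.mem_mk'.2 <|
        sub_mem_orthogonal_span_of_inner_eq (hinc p hp) (hinc p₀ hp₀)
    have := hP A hAne hAk
    omega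

theorem statement18 (d k r₁ r₂ : ℕ) (hr₁ : 0 < r₁) (hr₂ : 0 < r₂) (hkd : k + 2 ≤ d)
    (P : Finset (Euc d)) (N : Finset (Euc d)) (hN0 : ∀ z ∈ N, z ≠ 0)
    (hP : ∀ A : AffineSubspace ℝ (Euc d), (A : Set (Euc d)).Nonempty →
      Module.finrank ℝ A.direction = k →
      ((P : Set (Euc d)) ∩ (A : Set (Euc d))).ncard ≤ r₁ - 1)
    (hN : ∀ W : Submodule ℝ (Euc d), Module.finrank ℝ W = d - k - 1 →
      ((N : Set (Euc d)) ∩ (W : Set (Euc d))).ncard ≤ r₂ - 1)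
    (H : Finset (AffineSubspace ℝ (Euc d)))
    (hH : ∀ h ∈ H, ∃ z ∈ N, ∃ b : ℝ, (h : Set (Euc d)) = {x : Euc d | (inner ℝ x z : ℝ) = b}) :
    ¬ HasKrr P H r₁ r₂ :=
  statement18_general d k r₁ r₂ hr₁ hr₂ hkd P N hP hN H hH
end
end
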